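/- Let H be an inner product space over 𝕂 (ℝ or ℂ), let x, y₁,…,yₙ ∈ H, and let p ∈ (1, 2] and q > 1 satisfy 1/p + 1/q = 1. Then ∑_{i=1}^n |⟨x, yᵢ⟩|² ≤ n^{2/p − 1} · ‖x‖² · (∑_{i,j=1}^n |⟨yᵢ, yⱼ⟩|^q)^{1/q}. -/

import Mathlib

/-!
Put `aᵢ = ⟪x, yᵢ⟫` and `z = ∑ conj(aᵢ) yᵢ`. Then `∑ |aᵢ|² = ⟪x, z⟫ ≤ ‖x‖ ‖z‖`, and expanding
`‖z‖²` gives `(∑ |aᵢ|²)² ≤ ‖x‖² ∑ᵢⱼ |aᵢ| |aⱼ| |⟪yᵢ, yⱼ⟫|`. Hölder's inequality on the double sum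
bounds the right side by `‖x‖² (∑ |aᵢ|^p)^{2/p} (∑ᵢⱼ |⟪yᵢ, yⱼ⟫|^q)^{1/q}`, and since `2/p ≥ 1`,
the power mean inequality gives `(∑ |aᵢ|^p)^{2/p} ≤ n^{2/p - 1} ∑ |aᵢ|²`. Dividing by `∑ |aᵢ|²`
finishes the proof.
-/

open Finset
open scoped InnerProductSpace

section InnerProductSpace

variable {𝕜 H ι : Type*} [RCLike 𝕜] [NormedAddCommGroup H] [InnerProductSpace 𝕜 H] [Fintype ι]

theorem norm_sum_smul_sq_le (c : ι → 𝕜) (y : ι → H) :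
    ‖∑ i, c i • y i‖ ^ 2 ≤ ∑ i, ∑ j, ‖c i‖ * ‖c j‖ * ‖⟪y i, y j⟫_𝕜‖ := by
  calc ‖∑ i, c i • y i‖ ^ 2
      ≤ ‖⟪∑ i, c i • y i, ∑ j, c j • y j⟫_𝕜‖ := by
        rw [← inner_self_eq_norm_sq (𝕜 := 𝕜)]
        exact RCLike.re_le_norm _
    _ = ‖∑ i, ∑ j, (starRingEnd 𝕜) (c i) * c j * ⟪y i, y j⟫_𝕜‖ := by
        rw [sum_inner]
        simp only [inner_sum, inner_smul_left, inner_smul_right, mul_assoc]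
        exact congrArg norm <| sum_congr rfl fun _ _ => sum_congr rfl fun _ _ => mul_left_comm _ _ _
    _ ≤ ∑ i, ∑ j, ‖c i‖ * ‖c j‖ * ‖⟪y i, y j⟫_𝕜‖ := by
        refine (norm_sum_le _ _).trans (sum_le_sum fun i _ => ?_)
        refine (norm_sum_le _ _).trans (sum_le_sum fun j _ => ?_)
        simp only [norm_mul, RCLike.norm_conj, le_refl]

theorem sq_sum_norm_inner_sq_le (x : H) (y : ι → H) :
    (∑ i, ‖⟪x, y i⟫_𝕜‖ ^ 2) ^ 2 ≤
      ‖x‖ ^ 2 * ∑ i, ∑ j, ‖⟪x, y i⟫_𝕜‖ * ‖⟪x, y j⟫_𝕜‖ * ‖⟪y i, y j⟫_𝕜‖ := by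
  set z : H := ∑ i, (starRingEnd 𝕜) ⟪x, y i⟫_𝕜 • y i
  have hS : 0 ≤ ∑ i, ‖⟪x, y i⟫_𝕜‖ ^ 2 := by positivity
  have hxz : ⟪x, z⟫_𝕜 = ((∑ i, ‖⟪x, y i⟫_𝕜‖ ^ 2 : ℝ) : 𝕜) := by
    simp only [z, inner_sum, inner_smul_right, RCLike.conj_mul]
    push_cast
    rfl
  have hS_le : ∑ i, ‖⟪x, y i⟫_𝕜‖ ^ 2 ≤ ‖x‖ * ‖z‖ := by
    calc ∑ i, ‖⟪x, y i⟫_𝕜‖ ^ 2 = ‖⟪x, z⟫_𝕜‖ := by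
          rw [hxz, RCLike.norm_ofReal, abs_of_nonneg hS]
      _ ≤ ‖x‖ * ‖z‖ := norm_inner_le_norm x z
  calc (∑ i, ‖⟪x, y i⟫_𝕜‖ ^ 2) ^ 2 ≤ (‖x‖ * ‖z‖) ^ 2 := pow_le_pow_left₀ hS hS_le 2
    _ = ‖x‖ ^ 2 * ‖z‖ ^ 2 := mul_pow _ _ _
    _ ≤ _ := by
      gcongr
      simpa only [RCLike.norm_conj] using
        norm_sum_smul_sq_le (fun i => (starRingEnd 𝕜) ⟪x, y i⟫_𝕜) y

end InnerProductSpace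

section MeanInequalities

variable {ι : Type*} [Fintype ι]

theorem sum_sum_mul_mul_le_rpow_mul_rpow {f : ι → ℝ} {g : ι → ι → ℝ} {p q : ℝ}
    (hpq : p.HolderConjugate q) (hf : ∀ i, 0 ≤ f i) (hg : ∀ i j, 0 ≤ g i j) :
    ∑ i, ∑ j, f i * f j * g i j ≤
      (∑ i, f i ^ p) ^ (2 / p) * (∑ i, ∑ j, g i j ^ q) ^ (1 / q) := by
  have hHolder := Real.inner_le_Lp_mul_Lq_of_nonneg univ (f := fun ij : ι × ι => f ij.1 * f ij.2)
    (g := fun ij => g ij.1 ij.2) hpq (fun _ _ => mul_nonneg (hf _) (hf _)) (fun _ _ => hg _ _)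
  simp only [Fintype.sum_prod_type] at hHolder
  have hsq : ∑ i, ∑ j, (f i * f j) ^ p = (∑ i, f i ^ p) ^ (2 : ℝ) := by
    simp only [Real.mul_rpow (hf _) (hf _), ← mul_sum, ← sum_mul, Real.rpow_two, sq]
  rwa [hsq, ← Real.rpow_mul (sum_nonneg fun i _ => Real.rpow_nonneg (hf i) p), mul_one_div]
    at hHolder

theorem rpow_sum_rpow_le_card_mul_sum_sq {f : ι → ℝ} {p : ℝ} (hp : 0 < p) (hp2 : p ≤ 2)
    (hf : ∀ i, 0 ≤ f i) :
    (∑ i, f i ^ p) ^ (2 / p) ≤ (Fintype.card ι : ℝ) ^ (2 / p - 1) * ∑ i, f i ^ 2 := by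
  have hPowerMean := Real.rpow_sum_le_const_mul_sum_rpow_of_nonneg univ (f := fun i => f i ^ p)
    (p := 2 / p) (by rw [le_div_iff₀ hp]; linarith) (fun i _ => Real.rpow_nonneg (hf i) p)
  have hexp : ∀ i, (f i ^ p) ^ (2 / p) = f i ^ 2 := fun i => by
    rw [← Real.rpow_mul (hf i), mul_div_cancel₀ _ hp.ne', Real.rpow_two]
  simpa only [hexp, card_univ] using hPowerMean

end MeanInequalities

theorem stmt_19_general {𝕜 H : Type*} [RCLike 𝕜] [NormedAddCommGroup H] [InnerProductSpace 𝕜 H]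
    {n : ℕ} (x : H) (y : Fin n → H)
    {p q : ℝ} (hp : 1 < p) (hp2 : p ≤ 2) (hpq : 1 / p + 1 / q = 1) :
    ∑ i, ‖(inner 𝕜 x (y i) : 𝕜)‖ ^ 2 ≤ (n : ℝ) ^ (2 / p - 1) * ‖x‖ ^ 2 * (∑ i, ∑ j, ‖(inner 𝕜 (y i) (y j) : 𝕜)‖ ^ q) ^ (1 / q) := by
  have hpq' : p.HolderConjugate q :=
    Real.holderConjugate_iff.mpr ⟨hp, by simpa only [one_div] using hpq⟩
  set S := ∑ i, ‖⟪x, y i⟫_𝕜‖ ^ 2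
  set B := ∑ i, ∑ j, ‖⟪y i, y j⟫_𝕜‖ ^ q
  have hS : 0 ≤ S := by positivity
  have hK : 0 ≤ (n : ℝ) ^ (2 / p - 1) * ‖x‖ ^ 2 * B ^ (1 / q) := by positivity
  have hSq : S ^ 2 ≤ (n : ℝ) ^ (2 / p - 1) * ‖x‖ ^ 2 * B ^ (1 / q) * S := by
    calc S ^ 2 ≤ ‖x‖ ^ 2 * ∑ i, ∑ j, ‖⟪x, y i⟫_𝕜‖ * ‖⟪x, y j⟫_𝕜‖ * ‖⟪y i, y j⟫_𝕜‖ :=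
          sq_sum_norm_inner_sq_le x y
      _ ≤ ‖x‖ ^ 2 * ((∑ i, ‖⟪x, y i⟫_𝕜‖ ^ p) ^ (2 / p) * B ^ (1 / q)) := by
          gcongr
          exact sum_sum_mul_mul_le_rpow_mul_rpow hpq' (fun _ => norm_nonneg _)
            (fun _ _ => norm_nonneg _)
      _ ≤ ‖x‖ ^ 2 * (((n : ℝ) ^ (2 / p - 1) * S) * B ^ (1 / q)) := by
          gcongr
          simpa only [Fintype.card_fin] using
            rpow_sum_rpow_le_card_mul_sum_sq (f := fun i => ‖⟪x, y i⟫_𝕜‖) hpq'.pos hp2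
              (fun _ => norm_nonneg _)
      _ = _ := by ring
  nlinarith

theorem stmt_19 {𝕜 H : Type*} [RCLike 𝕜] [NormedAddCommGroup H] [InnerProductSpace 𝕜 H]
    {n : ℕ} (x : H) (y : Fin n → H)
    {p q : ℝ} (hp : 1 < p) (hp2 : p ≤ 2) (hq : 1 < q) (hpq : 1 / p + 1 / q = 1) :
    ∑ i, ‖(inner 𝕜 x (y i) : 𝕜)‖ ^ 2 ≤ (n : ℝ) ^ (2 / p - 1) * ‖x‖ ^ 2 * (∑ i, ∑ j, ‖(inner 𝕜 (y i) (y j) : 𝕜)‖ ^ q) ^ (1 / q) :=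
  stmt_19_general x y hp hp2 hpq
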